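/- arXiv:2008.09531 — 2 statements merged into one kernel-verified Lean document; each statement's English description precedes it below -/
import Mathlib

section
/- Let K be a field of characteristic 0, let m ≥ 2 be even, and let l, n ≥ 1. If v ∈ ⋀^m K^n satisfies hpf^{(m,l)}_A(v) = 0 for every (m·l)-element subset A ⊆ {1,…,n}, then hpf^{(m,l+1)}_B(v) = 0 for every (m·(l+1))-element subset B ⊆ {1,…,n}. That is, the hyper-Pfaffian varieties are nested: HPf^{(m,l)}(K^n) ⊆ HPf^{(m,l+1)}(K^n). -/
open scoped BigOperators

/-- Number of inversions of a list over a linear order. -/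
def inversions {α : Type*} [LinearOrder α] (L : List α) : ℕ :=
  (Finset.univ.filter fun p : Fin L.length × Fin L.length =>
    p.1 < p.2 ∧ L.get p.2 < L.get p.1).card

/-- Sign of a list of distinct elements: the sign of the permutation taking the increasing
enumeration of its set of entries to the list itself. -/
def listSign {α : Type*} [LinearOrder α] (L : List α) : ℤ :=
  (-1) ^ inversions L

/-- `sgn(I₁,…,I_l)`: the sign of the permutation of `A = I₁ ∪ ⋯ ∪ I_l` taking the increasing
enumeration of `A` to the concatenation of the increasing enumerations of the blocks. -/
def blocksSign {α : Type*} [LinearOrder α] (Is : List (Finset α)) : ℤ :=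
  listSign (Is.flatMap fun I => I.sort (· ≤ ·))

/-- The (unordered) hyper-Pfaffian form `hpf^{(m,l)}_A` evaluated at the coordinate vector
`c`: the sum over all unordered partitions of `A` into `m`-element blocks — each partition
represented by the unique ordered tuple whose blocks have strictly increasing minima — of
`sgn(I₁,…,I_l)·c(I₁)⋯c(I_l)`. -/
noncomputable def hpfEval (K : Type*) [Field K] {α : Type*} [LinearOrder α]
    (m l : ℕ) (A : Finset α) (c : Finset α → K) : K :=
  ∑ f ∈ Fintype.piFinset (fun _ : Fin l => Finset.powersetCard m A),
    if (∀ i j : Fin l, i ≠ j → Disjoint (f i) (f j)) ∧ Finset.univ.sup f = A ∧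
        (∀ i j : Fin l, i < j → (f i).min < (f j).min) then
      (blocksSign (List.ofFn f) : K) * ∏ t, c (f t)
    else 0

/-- The basis wedge `e_I` in the exterior algebra of `K^n = Fin n → K`. -/
noncomputable def eWedge (K : Type*) [Field K] (n : ℕ) (I : Finset (Fin n)) :
    ExteriorAlgebra K (Fin n → K) :=
  ((I.sort (· ≤ ·)).map fun i => ExteriorAlgebra.ι K (Pi.single i 1)).prod


/-! Expanding `hpf^{(m,l+1)}_B` along the block that contains the least element `μ` of `B`
gives `hpf^{(m,l+1)}_B = ∑_{μ ∈ I} ± c(I) · hpf^{(m,l)}_{B \ I}`: the blocks of a partition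
are listed by increasing minima, so the first block is the one containing `μ`, and the
remaining blocks form such a listing of a partition of `B \ I`. The sign splits off because
`sgn(I, I₂, …)` differs from `sgn(I₂, …)` only by the inversions between `I` and the other
blocks. Hence every `hpf^{(m,l+1)}_B` lies in the ideal generated by the `hpf^{(m,l)}_A`. -/

lemma List.countP_eq_sum_get {β : Type*} (p : β → Bool) (L : List β) :
    L.countP p = ∑ i : Fin L.length, if p (L.get i) then 1 else 0 := by
  induction L with
  | nil => rfl
  | cons a L ih =>
    simp only [List.countP_cons, ih, List.length_cons, Fin.sum_univ_succ, add_comm]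
    rfl

section Inversions

variable {α : Type*} [LinearOrder α]

lemma inversions_eq_sum (L : List α) :
    inversions L = ∑ i : Fin L.length, ∑ j : Fin L.length,
      if i < j ∧ L.get j < L.get i then 1 else 0 := by
  rw [inversions, Finset.card_filter, Fintype.sum_prod_type]

lemma inversions_cons (a : α) (L : List α) :
    inversions (a :: L) = L.countP (· < a) + inversions L := by
  rw [inversions_eq_sum, inversions_eq_sum, List.countP_eq_sum_get]
  simp only [List.length_cons, Fin.sum_univ_succ, Fin.succ_lt_succ_iff, Fin.succ_pos,
    Fin.not_lt_zero, false_and, true_and, if_false, zero_add, decide_eq_true_eq]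
  rfl

lemma inversions_append (M L : List α) :
    inversions (M ++ L) =
      inversions M + inversions L + (M.map fun a => L.countP (· < a)).sum := by
  induction M with
  | nil => simp [inversions]
  | cons a M ih =>
    simp only [List.cons_append, inversions_cons, ih, List.countP_append, List.map_cons,
      List.sum_cons]
    ring

lemma inversions_eq_zero_of_sorted {L : List α} (h : L.Pairwise (· ≤ ·)) :
    inversions L = 0 :=
  Finset.card_eq_zero.2 <| Finset.filter_eq_empty_iff.2 fun _ _ hp =>
    (h.rel_get_of_lt hp.1).not_gt hp.2

lemma Finset.countP_sort (s : Finset α) (p : α → Prop) [DecidablePred p] :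
    (s.sort (· ≤ ·)).countP (p ·) = (s.filter p).card := by
  rw [← Multiset.coe_countP, Finset.sort_eq, Multiset.countP_eq_card_filter]
  rfl

lemma blocksSign_cons {l : ℕ} (I : Finset α) (g : Fin l → Finset α)
    (hg : ∀ i j, i ≠ j → Disjoint (g i) (g j)) :
    blocksSign (I :: List.ofFn g) =
      (-1) ^ (∑ a ∈ I, ((Finset.univ.sup g).filter (· < a)).card) *
        blocksSign (List.ofFn g) := by
  have cross (a : α) : ((List.ofFn g).flatMap fun J => J.sort (· ≤ ·)).countP (· < a) =
      ((Finset.univ.sup g).filter (· < a)).card := by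
    rw [List.countP_flatMap, List.map_ofFn, List.sum_ofFn, Finset.sup_eq_biUnion,
      Finset.filter_biUnion, Finset.card_biUnion fun i _ j _ hij =>
        (hg i j hij).mono (Finset.filter_subset _ _) (Finset.filter_subset _ _)]
    exact Finset.sum_congr rfl fun j _ => (g j).countP_sort (· < a)
  rw [blocksSign, blocksSign, List.flatMap_cons, listSign, listSign, inversions_append,
    inversions_eq_zero_of_sorted (I.pairwise_sort _),
    ← List.sum_toFinset _ (I.sort_nodup _), Finset.sort_toFinset]
  simp only [cross, zero_add, pow_add, mul_comm]

end Inversions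

section Partitions

variable {α : Type*} [LinearOrder α]

def IsMinSortedPartition {l : ℕ} (A : Finset α) (f : Fin l → Finset α) : Prop :=
  (∀ i j : Fin l, i ≠ j → Disjoint (f i) (f j)) ∧ Finset.univ.sup f = A ∧
    (∀ i j : Fin l, i < j → (f i).min < (f j).min)

instance {l : ℕ} (A : Finset α) (f : Fin l → Finset α) :
    Decidable (IsMinSortedPartition A f) :=
  inferInstanceAs (Decidable (_ ∧ _ ∧ _))

lemma IsMinSortedPartition.subset {l : ℕ} {A : Finset α} {f : Fin l → Finset α}
    (h : IsMinSortedPartition A f) (i : Fin l) : f i ⊆ A :=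
  h.2.1 ▸ Finset.le_sup (Finset.mem_univ i)

lemma Fin.sup_univ_cons {β : Type*} [SemilatticeSup β] [OrderBot β] {l : ℕ} (b : β)
    (g : Fin l → β) :
    Finset.univ.sup (Fin.cons b g : Fin (l + 1) → β) = b ⊔ Finset.univ.sup g := by
  simp [Fin.univ_succ, Finset.sup_map, Function.comp_def]

lemma Finset.coe_lt_min {s : Finset α} {a : α} (h : ∀ b ∈ s, a < b) :
    (a : WithTop α) < s.min :=
  (Finset.lt_inf_iff (WithTop.coe_lt_top a)).2 fun b hb => WithTop.coe_lt_coe.2 (h b hb)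

lemma Finset.coe_min'_le_min {s t : Finset α} (hs : s.Nonempty) (hts : t ⊆ s) :
    (s.min' hs : WithTop α) ≤ t.min :=
  Finset.le_min fun b hb => WithTop.coe_le_coe.2 (s.min'_le b (hts hb))

variable {l : ℕ} {B I : Finset α} {g : Fin l → Finset α}

lemma isMinSortedPartition_cons_iff (hB : B.Nonempty) (hμ : B.min' hB ∈ I) (hIB : I ⊆ B) :
    IsMinSortedPartition B (Fin.cons I g) ↔ IsMinSortedPartition (B \ I) g := by
  have hImin : I.min = B.min' hB :=
    le_antisymm (Finset.min_le hμ) (Finset.coe_min'_le_min hB hIB)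
  have hsub (i : Fin l) : g i ⊆ Finset.univ.sup g := Finset.le_sup (Finset.mem_univ i)
  simp only [IsMinSortedPartition, Fin.forall_fin_succ, Fin.cons_zero, Fin.cons_succ,
    Fin.sup_univ_cons, ne_eq, not_true, Fin.succ_ne_zero, (Fin.succ_ne_zero _).symm, Fin.succ_inj,
    Fin.succ_pos, Fin.not_lt_zero, Fin.succ_lt_succ_iff, IsEmpty.forall_iff, not_false_eq_true,
    forall_const, true_and, forall_and, hImin]
  constructor
  · rintro ⟨⟨-, hIg, hdisj⟩, hsup, -, hmin⟩
    refine ⟨hdisj, ?_, hmin⟩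
    rw [← hsup, Finset.sup_eq_union, Finset.union_sdiff_cancel_left
      (Finset.disjoint_sup_right.2 fun i _ => hIg i)]
  · rintro ⟨hdisj, hsup, hmin⟩
    have hgB (i : Fin l) : g i ⊆ B \ I := hsup ▸ hsub i
    have hIg (i : Fin l) : Disjoint I (g i) := Finset.sdiff_disjoint.symm.mono_right (hgB i)
    refine ⟨⟨fun i => (hIg i).symm, hIg, hdisj⟩,
      by rw [hsup, Finset.sup_eq_union, Finset.union_sdiff_of_subset hIB], fun i => ?_, hmin⟩
    refine Finset.coe_lt_min fun b hb => ?_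
    obtain ⟨hbB, hbI⟩ := Finset.mem_sdiff.1 (hgB i hb)
    exact (B.min'_le b hbB).lt_of_ne fun h => hbI (h ▸ hμ)

lemma not_isMinSortedPartition_cons (hB : B.Nonempty) (hμ : B.min' hB ∉ I) :
    ¬ IsMinSortedPartition B (Fin.cons I g) := by
  rintro ⟨-, hsup, hmin⟩
  rw [Fin.sup_univ_cons] at hsup
  have hμB : B.min' hB ∈ I ∪ Finset.univ.sup g := hsup ▸ B.min'_mem hB
  obtain ⟨j, -, hj⟩ := Finset.mem_sup.1 ((Finset.mem_union.1 hμB).resolve_left hμ)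
  have hlt := hmin 0 j.succ (Fin.succ_pos j)
  rw [Fin.cons_zero, Fin.cons_succ] at hlt
  exact (Finset.min_le hj).not_gt ((Finset.coe_min'_le_min hB (hsup ▸ le_sup_left)).trans_lt hlt)

end Partitions

lemma Finset.sum_piFinset_succ {β M : Type*} [AddCommMonoid M] {l : ℕ} (s : Finset β)
    (F : (Fin (l + 1) → β) → M) :
    ∑ f ∈ Fintype.piFinset (fun _ => s), F f =
      ∑ b ∈ s, ∑ g ∈ Fintype.piFinset (fun _ => s), F (Fin.cons b g) := by
  rw [← Finset.sum_product']
  refine Finset.sum_nbij' (fun f => (f 0, Fin.tail f)) (fun p => Fin.cons p.1 p.2)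
    (fun f hf => ?_) (fun p hp => ?_) (fun f _ => Fin.cons_self_tail f) (fun p _ => by simp)
    (fun f _ => by rw [Fin.cons_self_tail])
  · simp only [Fintype.mem_piFinset, Finset.mem_product] at hf ⊢
    exact ⟨hf 0, fun i => hf i.succ⟩
  · simp only [Fintype.mem_piFinset, Finset.mem_product] at hp ⊢
    exact Fin.cases hp.1 hp.2

section Expansion

variable (K : Type*) [Field K] {α : Type*} [LinearOrder α] (m : ℕ) {l : ℕ}

lemma hpfEval_eq_sum_of_subset {A S : Finset α} (c : Finset α → K) (hAS : A ⊆ S) :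
    hpfEval K m l A c = ∑ f ∈ Fintype.piFinset (fun _ : Fin l => Finset.powersetCard m S),
      if IsMinSortedPartition A f then (blocksSign (List.ofFn f) : K) * ∏ t, c (f t) else 0 :=
  Finset.sum_subset (Fintype.piFinset_subset _ _ fun _ => Finset.powersetCard_mono hAS)
    fun f hfS hfA => if_neg fun (hf : IsMinSortedPartition A f) => hfA <|
      Fintype.mem_piFinset.2 fun i => Finset.mem_powersetCard.2
        ⟨hf.subset i, (Finset.mem_powersetCard.1 (Fintype.mem_piFinset.1 hfS i)).2⟩

theorem hpfEval_succ {B : Finset α} (c : Finset α → K) (hB : B.Nonempty) :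
    hpfEval K m (l + 1) B c = ∑ I ∈ (Finset.powersetCard m B).filter (B.min' hB ∈ ·),
      (-1) ^ (∑ a ∈ I, ((B \ I).filter (· < a)).card) * c I * hpfEval K m l (B \ I) c := by
  rw [hpfEval_eq_sum_of_subset K m c subset_rfl, Finset.sum_piFinset_succ, Finset.sum_filter]
  refine Finset.sum_congr rfl fun I hI => ?_
  split_ifs with hμ
  · rw [hpfEval_eq_sum_of_subset K m c (Finset.sdiff_subset : B \ I ⊆ B), Finset.mul_sum]
    refine Finset.sum_congr rfl fun g _ => ?_
    have hcons := isMinSortedPartition_cons_iff (g := g) hB hμ (Finset.mem_powersetCard.1 hI).1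
    by_cases hg : IsMinSortedPartition (B \ I) g
    · rw [if_pos (hcons.2 hg), if_pos hg, List.ofFn_cons, blocksSign_cons I g hg.1, hg.2.1]
      simp only [Fin.prod_univ_succ, Fin.cons_zero, Fin.cons_succ]
      push_cast
      ring
    · rw [if_neg (mt hcons.1 hg), if_neg hg, mul_zero]
  · exact Finset.sum_eq_zero fun g _ => if_neg (not_isMinSortedPartition_cons hB hμ)

end Expansion

theorem hpf_nested_general (K : Type*) [Field K]
    (m l n : ℕ) (hm2 : 2 ≤ m)
    (c : Finset (Fin n) → K)
    (h : ∀ A ∈ Finset.powersetCard (m * l) (Finset.univ : Finset (Fin n)),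
      hpfEval K m l A c = 0) :
    ∀ B ∈ Finset.powersetCard (m * (l + 1)) (Finset.univ : Finset (Fin n)),
      hpfEval K m (l + 1) B c = 0 := by
  intro B hB
  obtain ⟨-, hBcard⟩ := Finset.mem_powersetCard.1 hB
  have hBne : B.Nonempty := Finset.card_pos.1 (hBcard ▸ Nat.mul_pos (by omega) l.succ_pos)
  rw [hpfEval_succ K m c hBne]
  refine Finset.sum_eq_zero fun I hI => ?_
  obtain ⟨hIB, hIcard⟩ := Finset.mem_powersetCard.1 (Finset.mem_filter.1 hI).1
  have hcard : (B \ I).card = m * l := by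
    rw [Finset.card_sdiff_of_subset hIB, hBcard, hIcard, Nat.mul_succ, Nat.add_sub_cancel]
  rw [h (B \ I) (Finset.mem_powersetCard.2 ⟨Finset.subset_univ _, hcard⟩), mul_zero]

/-- The hyper-Pfaffian varieties are nested: if `v = Σ_I c(I)·e_I ∈ ⋀^m K^n`
(with `m ≥ 2` even) satisfies `hpf^{(m,l)}_A(v) = 0` for every `(m·l)`-element subset
`A ⊆ {1,…,n}`, then `hpf^{(m,l+1)}_B(v) = 0` for every `(m·(l+1))`-element subset `B`;
i.e. `HPf^{(m,l)}(K^n) ⊆ HPf^{(m,l+1)}(K^n)`. -/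
theorem hpf_nested (K : Type*) [Field K] [CharZero K]
    (m l n : ℕ) (hm : Even m) (hm2 : 2 ≤ m) (hl : 1 ≤ l) (hn : 1 ≤ n)
    (c : Finset (Fin n) → K)
    (v : ExteriorAlgebra K (Fin n → K))
    (hv : v = ∑ I ∈ Finset.powersetCard m (Finset.univ : Finset (Fin n)),
      c I • eWedge K n I)
    (h : ∀ A ∈ Finset.powersetCard (m * l) (Finset.univ : Finset (Fin n)),
      hpfEval K m l A c = 0) :
    ∀ B ∈ Finset.powersetCard (m * (l + 1)) (Finset.univ : Finset (Fin n)),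
      hpfEval K m (l + 1) B c = 0 :=
  hpf_nested_general K m l n hm2 c h
end

section
/- Let K be a field of characteristic 0 and let e₁,…,e₇ be the standard basis of K⁷. The trivector ω = (e₁∧e₂ + e₃∧e₄ + e₅∧e₆) ∧ e₇ ∈ ⋀³ K⁷ cannot be written in the form (u₁∧u₂ + u₃∧u₄) ∧ w for any vectors u₁, u₂, u₃, u₄, w ∈ K⁷. -/
/-!
Write `β = e₁∧e₂ + e₃∧e₄ + e₅∧e₆` and suppose `β ∧ e₇ = η ∧ w` with `η = u₁∧u₂ + u₃∧u₄`.
Contracting from the right with the dual vector `e₇*`, which kills `β`, gives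
`β = c η - (η ⌊ e₇*) ∧ w` with `c = e₇*(w)`, hence `β ∧ w = c η ∧ w`. Since `β` and `η` are sums
of commuting square-zero bivectors, they commute and `η³ = 0`, so
`β³ ∧ e₇ = β² ∧ η ∧ w = c² η³ ∧ w = 0`. But `β³ ∧ e₇ = 6 e₁∧⋯∧e₇ ≠ 0` in characteristic zero.
-/

/-- The standard basis vector `e_i` of `K⁷` inside the exterior algebra. -/
noncomputable def e7 (K : Type*) [Field K] (i : Fin 7) : ExteriorAlgebra K (Fin 7 → K) :=
  ExteriorAlgebra.ι K (Pi.single i 1)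

open ExteriorAlgebra CliffordAlgebra

section SquareZero

variable {R : Type*} [Ring R] {a b c : R}

theorem Commute.add_pow_three_of_sq_eq_zero_right (h : Commute a b) (hb : b ^ 2 = 0) :
    (a + b) ^ 3 = a ^ 3 + 3 • (a ^ 2 * b) := by
  simp [h.add_pow, Finset.sum_range_succ, pow_succ _ 2, hb, ← nsmul_eq_mul', add_comm]

theorem Commute.add_sq_of_sq_eq_zero (h : Commute a b) (ha : a ^ 2 = 0) (hb : b ^ 2 = 0) :
    (a + b) ^ 2 = 2 • (a * b) := by
  rw [h.add_sq, ha, hb, zero_add, add_zero, mul_assoc, two_mul, two_nsmul]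

theorem Commute.add_pow_three_of_sq_eq_zero (h : Commute a b) (ha : a ^ 2 = 0) (hb : b ^ 2 = 0) :
    (a + b) ^ 3 = 0 := by
  rw [h.add_pow_three_of_sq_eq_zero_right hb, pow_succ, ha, zero_mul, zero_mul, smul_zero,
    add_zero]

theorem Commute.add_add_pow_three_of_sq_eq_zero (hab : Commute a b) (hac : Commute a c)
    (hbc : Commute b c) (ha : a ^ 2 = 0) (hb : b ^ 2 = 0) (hc : c ^ 2 = 0) :
    (a + b + c) ^ 3 = 6 • (a * b * c) := by
  rw [(hac.add_left hbc).add_pow_three_of_sq_eq_zero_right hc,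
    hab.add_pow_three_of_sq_eq_zero ha hb, hab.add_sq_of_sq_eq_zero ha hb, zero_add,
    smul_mul_assoc, smul_smul]
  rfl

end SquareZero

theorem sq_mul_mul_eq_zero_of_mul_eq_smul {S A : Type*} [CommSemiring S] [Ring A] [Algebra S A]
    {β η u : A} {c : S} (hβη : Commute β η) (hη : η ^ 3 = 0) (hβu : β * u = c • (η * u)) :
    β ^ 2 * (η * u) = 0 := by
  have hswap (x : A) : β * (η * x) = η * (β * x) := by rw [← mul_assoc, hβη.eq, mul_assoc]
  calc β ^ 2 * (η * u) = β * (η * (β * u)) := by rw [sq, mul_assoc, hswap]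
    _ = c • (β * (η * (η * u))) := by rw [hβu, mul_smul_comm, mul_smul_comm]
    _ = c • (η * (η * (β * u))) := by rw [hswap, hswap]
    _ = (c * c) • (η ^ 3 * u) := by
      rw [hβu, mul_smul_comm, mul_smul_comm, smul_smul, pow_succ, sq, mul_assoc, mul_assoc]
    _ = 0 := by rw [hη, zero_mul, smul_zero]

namespace ExteriorAlgebra

section CommRing

variable {R M : Type*} [CommRing R] [AddCommGroup M] [Module R M]

theorem ι_mul_ι_commute_ι (x y z : M) : Commute (ι R x * ι R y) (ι R z) := by
  have hswap (p q : M) : ι R p * ι R q = -(ι R q * ι R p) :=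
    eq_neg_of_add_eq_zero_left (ι_add_mul_swap p q)
  change ι R x * ι R y * ι R z = ι R z * (ι R x * ι R y)
  rw [mul_assoc, hswap y z, mul_neg, ← mul_assoc, hswap x z, neg_mul, neg_neg, mul_assoc]

theorem ι_mul_ι_commute_ι_mul_ι (x y z t : M) : Commute (ι R x * ι R y) (ι R z * ι R t) :=
  (ι_mul_ι_commute_ι x y z).mul_right (ι_mul_ι_commute_ι x y t)

theorem ι_mul_ι_sq (x y : M) : (ι R x * ι R y) ^ 2 = 0 := by
  rw [sq, ← mul_assoc, (ι_mul_ι_commute_ι x y x).eq, ← mul_assoc, ι_sq_zero, zero_mul, zero_mul]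

theorem contractRight_ι_mul_ι (d : Module.Dual R M) (x y : M) :
    contractRight (ι R x * ι R y) d = d y • ι R x - d x • ι R y := by
  rw [contractRight_mul_ι, contractRight_ι, Algebra.algebraMap_eq_smul_one, smul_one_mul]

theorem mul_ι_eq_smul_of_mul_ι_eq {d : Module.Dual R M} {v w : M} {β η : ExteriorAlgebra R M}
    (h : β * ι R v = η * ι R w) (hv : d v = 1) (hβ : contractRight β d = 0) :
    β * ι R w = d w • (η * ι R w) := by
  have hc := congrArg (fun x => contractRight x d) h
  simp only [contractRight_mul_ι, hv, hβ, one_smul, zero_mul, sub_zero] at hc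
  rw [hc, sub_mul, mul_assoc, ι_sq_zero, mul_zero, sub_zero, smul_mul_assoc]

theorem pow_three_mul_ι_eq_zero_of_mul_ι_eq {d : Module.Dual R M} {v w : M}
    {β η : ExteriorAlgebra R M} (h : β * ι R v = η * ι R w) (hv : d v = 1)
    (hβ : contractRight β d = 0) (hβη : Commute β η) (hη : η ^ 3 = 0) :
    β ^ 3 * ι R v = 0 := by
  rw [pow_succ, mul_assoc, h]
  exact sq_mul_mul_eq_zero_of_mul_eq_smul hβη hη (mul_ι_eq_smul_of_mul_ι_eq h hv hβ)

end CommRing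

theorem ιMulti_ne_zero_of_linearIndependent {K E : Type*} [Field K] [AddCommGroup E]
    [Module K E] {n : ℕ} {v : Fin n → E} (hv : LinearIndependent K v) : ιMulti K n v ≠ 0 := by
  have := (exteriorPower.ιMulti_family_linearIndependent_field (n := n) hv).ne_zero
    (Set.powersetCard.ofFinEmbEquiv (OrderIso.refl (Fin n)).toOrderEmbedding)
  simpa [exteriorPower.ιMulti_family, ← ZeroMemClass.coe_eq_zero] using this

end ExteriorAlgebra

/-- The trivector `ω = (e₁∧e₂ + e₃∧e₄ + e₅∧e₆) ∧ e₇ ∈ ⋀³ K⁷` cannot be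
written in the form `(u₁∧u₂ + u₃∧u₄) ∧ w` for any vectors `u₁, u₂, u₃, u₄, w ∈ K⁷`. -/
theorem rank_three_wedge_not_rank_two_wedge (K : Type*) [Field K] [CharZero K] :
    ¬ ∃ u₁ u₂ u₃ u₄ w : Fin 7 → K,
      (e7 K 0 * e7 K 1 + e7 K 2 * e7 K 3 + e7 K 4 * e7 K 5) * e7 K 6 =
        (ExteriorAlgebra.ι K u₁ * ExteriorAlgebra.ι K u₂ +
          ExteriorAlgebra.ι K u₃ * ExteriorAlgebra.ι K u₄) * ExteriorAlgebra.ι K w := by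
  rintro ⟨u₁, u₂, u₃, u₄, w, h⟩
  simp only [e7] at h
  set e : Fin 7 → Fin 7 → K := fun i => Pi.single i 1
  set β := ι K (e 0) * ι K (e 1) + ι K (e 2) * ι K (e 3) + ι K (e 4) * ι K (e 5)
  set η := ι K u₁ * ι K u₂ + ι K u₃ * ι K u₄
  have hβη : Commute β η := by
    refine .add_left (.add_left ?_ ?_) ?_ <;>
      exact .add_right (ι_mul_ι_commute_ι_mul_ι _ _ _ _) (ι_mul_ι_commute_ι_mul_ι _ _ _ _)
  have hη : η ^ 3 = 0 := (ι_mul_ι_commute_ι_mul_ι _ _ _ _).add_pow_three_of_sq_eq_zero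
    (ι_mul_ι_sq _ _) (ι_mul_ι_sq _ _)
  have hvol : β ^ 3 * ι K (e 6) = 6 • ιMulti K 7 e := by
    rw [Commute.add_add_pow_three_of_sq_eq_zero (ι_mul_ι_commute_ι_mul_ι _ _ _ _)
      (ι_mul_ι_commute_ι_mul_ι _ _ _ _) (ι_mul_ι_commute_ι_mul_ι _ _ _ _)
      (ι_mul_ι_sq _ _) (ι_mul_ι_sq _ _) (ι_mul_ι_sq _ _), smul_mul_assoc]
    simp only [ιMulti_apply, List.ofFn_succ, List.ofFn_zero, List.prod_cons, List.prod_nil,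
      mul_one, mul_assoc]
    rfl
  have hvol_ne : 6 • ιMulti K 7 e ≠ 0 := by
    rw [← Nat.cast_smul_eq_nsmul K]
    exact smul_ne_zero (by norm_num)
      (ιMulti_ne_zero_of_linearIndependent (Pi.linearIndependent_single_one (Fin 7) K))
  refine hvol_ne (hvol ▸ pow_three_mul_ι_eq_zero_of_mul_ι_eq (d := LinearMap.proj 6) h ?_ ?_ hβη hη)
  · simp [e]
  · simp [β, e, contractRight_ι_mul_ι]
end
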